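/- Let K, L ≥ 2 be integers and let offers satisfy 0 ≤ s1 ≤ s2 ≤ … ≤ sK ≤ 1 with sK > 0, and let f_L(x) = (1 − (1−x)^L)/x for x ∈ (0,1], f_L(0) = L. A strategy p* ∈ Δ is a symmetric Nash equilibrium of the responder game (i.e. Π(p*,p*) ≥ Π(p,p*) for all p ∈ Δ) if and only if p*_K > 0 and for every i ∈ {1,…,K−1} either (p*_i = 0 and si·f_L(p*_i) ≤ sK·f_L(p*_K)) or (p*_i > 0 and si·f_L(p*_i) = sK·f_L(p*_K)). Moreover there is exactly one p* ∈ Δ satisfying these conditions. -/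

import Mathlib

/-- `W_L(x) = (1 - (1-x)^L)/(L·x)` for `x ∈ (0,1]`, with `W_L(0) = 1`. -/
noncomputable def WL (L : ℕ) (x : ℝ) : ℝ :=
  if x = 0 then 1 else (1 - (1-x)^L) / ((L:ℝ) * x)

/-- The function `f_L(x) = (1 - (1-x)^L)/x` for `x ∈ (0,1]`, with `f_L(0) = L`. -/
noncomputable def fL (L : ℕ) (x : ℝ) : ℝ :=
  if x = 0 then (L:ℝ) else (1 - (1-x)^L) / x

/-- The simplex of mixed strategies over `K` proposers. -/
def simplex (K : ℕ) : Set (Fin K → ℝ) :=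
  {p | (∀ i, 0 ≤ p i) ∧ ∑ i, p i = 1}

/-- Expected payoff of a focal responder playing `p` when each of the other
`L-1` responders plays `q`, given offers `s`. -/
noncomputable def payoff (K L : ℕ) (s p q : Fin K → ℝ) : ℝ :=
  ∑ i, s i * p i * WL L (q i)

/-!
The responder game is a potential game. With `G` a primitive of `f_L`, a maximizer `p` of
`q ↦ ∑ sᵢ G(qᵢ)` on the simplex satisfies the first-order conditions along the directions
`eⱼ - eᵢ` (`pᵢ > 0`), i.e. `p` is supported on the maximizers of `i ↦ sᵢ f_L(pᵢ)`; as the payoff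
is linear in the focal responder's strategy, this is exactly the equilibrium condition.
Since `f_L` is strictly decreasing, two such profiles coincide: if `aᵢ > bᵢ` and `aⱼ < bⱼ`, the
maximum of `sₘ f_L(aₘ)`, attained at `i`, is below `sᵢ f_L(bᵢ)`, hence below the maximum of
`sₘ f_L(bₘ)`, attained at `j`, which in turn is below `sⱼ f_L(aⱼ)`.
For monotone offers with `s_K > 0` the top proposer is always in the support, which turns the
support condition into the stated one.
-/

open Finset

lemma fL_eq_geom_sum (L : ℕ) (x : ℝ) : fL L x = ∑ j ∈ range L, (1 - x) ^ j := by
  unfold fL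
  split_ifs with hx
  · simp [hx]
  · rw [geom_sum_eq (by simpa using hx), div_eq_div_iff hx (by simpa using hx)]
    ring

lemma fL_zero (L : ℕ) : fL L 0 = L := by simp [fL]

lemma fL_eq_mul_WL (L : ℕ) (x : ℝ) : fL L x = L * WL L x := by
  unfold fL WL
  split_ifs with hx
  · simp
  · rcases eq_or_ne L 0 with rfl | hL
    · simp
    · field_simp

lemma one_le_fL {L : ℕ} (hL : 1 ≤ L) {x : ℝ} (hx : x ≤ 1) : 1 ≤ fL L x := by
  rw [fL_eq_geom_sum]
  calc (1 : ℝ) = (1 - x) ^ 0 := (pow_zero _).symm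
    _ ≤ ∑ j ∈ range L, (1 - x) ^ j :=
      single_le_sum (fun j _ => pow_nonneg (by linarith) j) (mem_range.2 hL)

lemma fL_strictAntiOn {L : ℕ} (hL : 2 ≤ L) : StrictAntiOn (fL L) (Set.Icc 0 1) := by
  intro x hx y hy hxy
  simp only [fL_eq_geom_sum]
  refine sum_lt_sum (fun j _ => pow_le_pow_left₀ (by linarith [hy.2]) (by linarith) j)
    ⟨1, mem_range.2 hL, by simpa using hxy⟩

lemma fL_lt_of_mem_Ioc {L : ℕ} (hL : 2 ≤ L) {x : ℝ} (hx : x ∈ Set.Ioc 0 1) : fL L x < L :=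
  fL_zero L ▸ fL_strictAntiOn hL ⟨le_refl 0, zero_le_one⟩ ⟨hx.1.le, hx.2⟩ hx.1

noncomputable def fLPrimitive (L : ℕ) (x : ℝ) : ℝ :=
  ∑ j ∈ range L, (1 - (1 - x) ^ (j + 1)) / (j + 1)

lemma hasDerivAt_fLPrimitive (L : ℕ) (x : ℝ) : HasDerivAt (fLPrimitive L) (fL L x) x := by
  rw [fL_eq_geom_sum]
  unfold fLPrimitive
  refine HasDerivAt.fun_sum fun j _ => ?_
  have h := ((((hasDerivAt_id' x).const_sub 1).fun_pow (j + 1)).const_sub 1).div_const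
    ((j : ℝ) + 1)
  refine h.congr_deriv ?_
  rw [Nat.add_sub_cancel]
  push_cast
  field_simp

section Simplex

variable {ι : Type*}

def IsSupportedOnMaximizers (c p : ι → ℝ) : Prop :=
  ∀ i j, 0 < p i → c j ≤ c i

lemma isSupportedOnMaximizers_const_mul_iff {c p : ι → ℝ} {a : ℝ} (ha : 0 < a) :
    IsSupportedOnMaximizers (fun i => a * c i) p ↔ IsSupportedOnMaximizers c p := by
  simp only [IsSupportedOnMaximizers, mul_le_mul_iff_right₀ ha]

variable [Fintype ι]

lemma IsSupportedOnMaximizers.le_sum_mul {c q : ι → ℝ} (hq : q ∈ stdSimplex ℝ ι)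
    (h : IsSupportedOnMaximizers c q) (j : ι) : c j ≤ ∑ i, q i * c i := by
  calc c j = ∑ i, q i * c j := by rw [← sum_mul, hq.2, one_mul]
    _ ≤ ∑ i, q i * c i := by
      refine sum_le_sum fun i _ => ?_
      rcases (hq.1 i).eq_or_lt with hi | hi
      · simp [← hi]
      · exact mul_le_mul_of_nonneg_left (h i j hi) hi.le

lemma forall_sum_mul_le_iff {c q : ι → ℝ} (hq : q ∈ stdSimplex ℝ ι) :
    (∀ p ∈ stdSimplex ℝ ι, ∑ i, p i * c i ≤ ∑ i, q i * c i) ↔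
      IsSupportedOnMaximizers c q := by
  constructor
  · classical
    intro h i j hi
    have hle : ∀ m, c m ≤ ∑ i, q i * c i := fun m => by
      simpa [Pi.single_apply] using h _ (single_mem_stdSimplex ℝ m)
    refine (hle j).trans (not_lt.1 fun hlt => lt_irrefl (∑ i, q i * c i) ?_)
    calc ∑ m, q m * c m < ∑ m, q m * ∑ i, q i * c i :=
          sum_lt_sum (fun m _ => mul_le_mul_of_nonneg_left (hle m) (hq.1 m))
            ⟨i, mem_univ i, mul_lt_mul_of_pos_left hlt hi⟩
      _ = ∑ i, q i * c i := by rw [← sum_mul, hq.2, one_mul]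
  · intro h p hp
    calc ∑ i, p i * c i ≤ ∑ i, p i * ∑ m, q m * c m :=
          sum_le_sum fun i _ => mul_le_mul_of_nonneg_left (h.le_sum_mul hq i) (hp.1 i)
      _ = ∑ m, q m * c m := by rw [← sum_mul, hp.2, one_mul]

lemma isSupportedOnMaximizers_of_isMaxOn {L : ℕ} {s p : ι → ℝ} (hp : p ∈ stdSimplex ℝ ι)
    (hmax : IsMaxOn (fun q => ∑ m, s m * fLPrimitive L (q m)) (stdSimplex ℝ ι) p) :
    IsSupportedOnMaximizers (fun i => s i * fL L (p i)) p := by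
  classical
  intro i j hi
  set v : ι → ℝ := Pi.single j 1 - Pi.single i 1
  have hderiv : HasFDerivAt (fun q : ι → ℝ => ∑ m, s m * fLPrimitive L (q m))
      (∑ m, s m • fL L (p m) • ContinuousLinearMap.proj m) p :=
    HasFDerivAt.fun_sum fun m _ =>
      ((hasDerivAt_fLPrimitive L (p m)).comp_hasFDerivAt (f := fun q : ι → ℝ => q m) p
        (hasFDerivAt_apply (𝕜 := ℝ) (F' := fun _ : ι => ℝ) m p)).const_mul (s m)
  have hmove : p + p i • v ∈ stdSimplex ℝ ι := by
    refine ⟨fun m => ?_, ?_⟩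
    · have := hp.1 m
      simp only [v, Pi.add_apply, Pi.smul_apply, Pi.sub_apply, Pi.single_apply, smul_eq_mul]
      split_ifs with hj hi' <;> subst_vars <;> linarith
    · simp [v, sum_add_distrib, ← mul_sum, hp.2]
  have hcone : p i • v ∈ posTangentConeAt (stdSimplex ℝ ι) p :=
    mem_posTangentConeAt_of_segment_subset ((convex_stdSimplex ℝ ι).segment_subset hp hmove)
  have hdir : p i * (s j * fL L (p j)) ≤ p i * (s i * fL L (p i)) := by
    simpa [v, mul_sub, sum_sub_distrib, Pi.single_apply] using
      hmax.localize.hasFDerivWithinAt_nonpos hderiv.hasFDerivWithinAt hcone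
  exact le_of_mul_le_mul_left hdir hi

lemma exists_isSupportedOnMaximizers [Nonempty ι] (L : ℕ) (s : ι → ℝ) :
    ∃ p ∈ stdSimplex ℝ ι, IsSupportedOnMaximizers (fun i => s i * fL L (p i)) p := by
  classical
  have hG : Continuous (fLPrimitive L) :=
    continuous_iff_continuousAt.2 fun x => (hasDerivAt_fLPrimitive L x).continuousAt
  have hcont : Continuous fun q : ι → ℝ => ∑ m, s m * fLPrimitive L (q m) :=
    continuous_finsetSum _ fun m _ => continuous_const.mul (hG.comp (continuous_apply m))
  obtain ⟨p, hp, hmax⟩ := (isCompact_stdSimplex ℝ ι).exists_isMaxOn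
    ⟨_, single_mem_stdSimplex ℝ (Classical.arbitrary ι)⟩ hcont.continuousOn
  exact ⟨p, hp, isSupportedOnMaximizers_of_isMaxOn hp hmax⟩

lemma exists_lt_of_mem_stdSimplex_of_ne {a b : ι → ℝ} (ha : a ∈ stdSimplex ℝ ι)
    (hb : b ∈ stdSimplex ℝ ι) (hab : a ≠ b) : ∃ i, b i < a i := by
  by_contra! h
  exact hab <| funext fun i =>
    (sum_eq_sum_iff_of_le fun i _ => h i).1 (ha.2.trans hb.2.symm) i (mem_univ i)

lemma IsSupportedOnMaximizers.pos_of_pos {L : ℕ} (hL : 1 ≤ L) {s p : ι → ℝ} {k : ι}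
    (hk : 0 < s k) (hp : p ∈ stdSimplex ℝ ι)
    (h : IsSupportedOnMaximizers (fun i => s i * fL L (p i)) p) {i : ι} (hi : 0 < p i) :
    0 < s i := by
  have hf : ∀ m, 1 ≤ fL L (p m) := fun m => one_le_fL hL (mem_Icc_of_mem_stdSimplex hp m).2
  have hck : 0 < s k * fL L (p k) := mul_pos hk (one_pos.trans_le (hf k))
  exact pos_of_mul_pos_left (hck.trans_le (h i k hi)) (zero_le_one.trans (hf i))

lemma IsSupportedOnMaximizers.eq {L : ℕ} (hL : 2 ≤ L) {s a b : ι → ℝ} {k : ι}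
    (hk : 0 < s k) (ha : a ∈ stdSimplex ℝ ι) (hb : b ∈ stdSimplex ℝ ι)
    (hca : IsSupportedOnMaximizers (fun i => s i * fL L (a i)) a)
    (hcb : IsSupportedOnMaximizers (fun i => s i * fL L (b i)) b) : a = b := by
  by_contra hab
  obtain ⟨i, hi⟩ := exists_lt_of_mem_stdSimplex_of_ne ha hb hab
  obtain ⟨j, hj⟩ := exists_lt_of_mem_stdSimplex_of_ne hb ha (Ne.symm hab)
  have hai : 0 < a i := (hb.1 i).trans_lt hi
  have hbj : 0 < b j := (ha.1 j).trans_lt hj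
  have hfi : fL L (a i) < fL L (b i) :=
    fL_strictAntiOn hL (mem_Icc_of_mem_stdSimplex hb i) (mem_Icc_of_mem_stdSimplex ha i) hi
  have hfj : fL L (b j) < fL L (a j) :=
    fL_strictAntiOn hL (mem_Icc_of_mem_stdSimplex ha j) (mem_Icc_of_mem_stdSimplex hb j) hj
  have hsi := hca.pos_of_pos (by omega) hk ha hai
  have hsj := hcb.pos_of_pos (by omega) hk hb hbj
  linarith [hca i j hai, hcb j i hbj, mul_lt_mul_of_pos_left hfi hsi,
    mul_lt_mul_of_pos_left hfj hsj]

end Simplex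

lemma payoff_eq_sum_mul (K L : ℕ) (s p q : Fin K → ℝ) :
    payoff K L s p q = ∑ i, p i * (s i * WL L (q i)) :=
  sum_congr rfl fun i _ => by ring

lemma forall_payoff_le_iff {K L : ℕ} (hL : L ≠ 0) {s q : Fin K → ℝ} (hq : q ∈ simplex K) :
    (∀ p ∈ simplex K, payoff K L s p q ≤ payoff K L s q q) ↔
      IsSupportedOnMaximizers (fun i => s i * fL L (q i)) q := by
  simp only [payoff_eq_sum_mul, fL_eq_mul_WL, mul_left_comm (s _)]
  rw [isSupportedOnMaximizers_const_mul_iff (by positivity)]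
  exact forall_sum_mul_le_iff hq

lemma isSupportedOnMaximizers_iff_of_top_offer {K L : ℕ} (hL : 2 ≤ L) {s p : Fin K → ℝ}
    {k : Fin K} (hk : (k : ℕ) = K - 1) (hsk : ∀ i, s i ≤ s k) (hpos : 0 < s k)
    (hp : p ∈ simplex K) :
    IsSupportedOnMaximizers (fun i => s i * fL L (p i)) p ↔
      0 < p k ∧ ∀ i : Fin K, (i : ℕ) < K - 1 →
        (p i = 0 ∧ s i * fL L (p i) ≤ s k * fL L (p k)) ∨
        (0 < p i ∧ s i * fL L (p i) = s k * fL L (p k)) := by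
  have hp1 : ∀ i, p i ∈ Set.Icc 0 1 := mem_Icc_of_mem_stdSimplex hp
  constructor
  · intro h
    have hpk : 0 < p k := by
      obtain ⟨i, -, hi⟩ : ∃ i ∈ univ, (0 : ℝ) < p i :=
        exists_lt_of_sum_lt (by rw [sum_const_zero, hp.2]; exact one_pos)
      refine (hp.1 k).lt_of_ne fun hk0 => ?_
      have hki : s k * fL L (p k) ≤ s i * fL L (p i) := h i k hi
      rw [← hk0, fL_zero] at hki
      have hfi : 0 ≤ fL L (p i) := zero_le_one.trans (one_le_fL (by omega) (hp1 i).2)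
      have : s i * fL L (p i) < s k * L := calc
        s i * fL L (p i) ≤ s k * fL L (p i) := mul_le_mul_of_nonneg_right (hsk i) hfi
        _ < s k * L := mul_lt_mul_of_pos_left (fL_lt_of_mem_Ioc hL ⟨hi, (hp1 i).2⟩) hpos
      linarith
    refine ⟨hpk, fun i _ => ?_⟩
    rcases (hp.1 i).eq_or_lt with hi | hi
    · exact Or.inl ⟨hi.symm, h k i hpk⟩
    · exact Or.inr ⟨hi, le_antisymm (h k i hpk) (h i k hi)⟩
  · rintro ⟨hpk, hcond⟩
    have hmax : ∀ i, s i * fL L (p i) ≤ s k * fL L (p k) ∧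
        (0 < p i → s i * fL L (p i) = s k * fL L (p k)) := by
      intro i
      by_cases hi : (i : ℕ) < K - 1
      · rcases hcond i hi with ⟨hi0, hle⟩ | ⟨-, heq⟩
        · exact ⟨hle, fun hi' => absurd hi0 hi'.ne'⟩
        · exact ⟨heq.le, fun _ => heq⟩
      · obtain rfl : i = k := Fin.ext (by omega)
        exact ⟨le_rfl, fun _ => rfl⟩
    intro i j hi
    simpa only [(hmax i).2 hi] using (hmax j).1

theorem stmt13 (K L : ℕ) (hK : 2 ≤ K) (hL : 2 ≤ L)
    (s : Fin K → ℝ) (hmono : Monotone s)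
    (hpos : 0 < s ⟨K-1, by omega⟩) :
    (∀ pstar ∈ simplex K,
      ((∀ p ∈ simplex K, payoff K L s p pstar ≤ payoff K L s pstar pstar) ↔
        (0 < pstar ⟨K-1, by omega⟩ ∧
          ∀ i : Fin K, (i:ℕ) < K-1 →
            (pstar i = 0 ∧
              s i * fL L (pstar i) ≤ s ⟨K-1, by omega⟩ * fL L (pstar ⟨K-1, by omega⟩)) ∨
            (0 < pstar i ∧
              s i * fL L (pstar i) = s ⟨K-1, by omega⟩ * fL L (pstar ⟨K-1, by omega⟩))))) ∧
    (∃! pstar : Fin K → ℝ, pstar ∈ simplex K ∧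
      0 < pstar ⟨K-1, by omega⟩ ∧
      ∀ i : Fin K, (i:ℕ) < K-1 →
        (pstar i = 0 ∧
          s i * fL L (pstar i) ≤ s ⟨K-1, by omega⟩ * fL L (pstar ⟨K-1, by omega⟩)) ∨
        (0 < pstar i ∧
          s i * fL L (pstar i) = s ⟨K-1, by omega⟩ * fL L (pstar ⟨K-1, by omega⟩))) := by
  have hsk : ∀ i : Fin K, s i ≤ s ⟨K-1, by omega⟩ := fun i =>
    hmono (Fin.le_iff_val_le_val.2 (Nat.le_sub_one_of_lt i.isLt))
  have hchar := fun p (hp : p ∈ simplex K) =>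
    isSupportedOnMaximizers_iff_of_top_offer hL rfl hsk hpos hp
  refine ⟨fun p hp => (forall_payoff_le_iff (by omega) hp).trans (hchar p hp), ?_⟩
  have : Nonempty (Fin K) := ⟨⟨0, by omega⟩⟩
  obtain ⟨p, hp, hpmax⟩ := exists_isSupportedOnMaximizers L s
  exact ⟨p, ⟨hp, (hchar p hp).1 hpmax⟩, fun q ⟨hq, hqc⟩ =>
    ((hchar q hq).2 hqc).eq hL hpos hq hp hpmax⟩
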